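/- arXiv:2512.05154 — 3 statements merged into one kernel-verified Lean document; each statement's English description precedes it below -/
import Mathlib

section
/- Fix c ∈ {6, 7}. For every prime p and every integer n such that it is not the case that p = 2 and 2 divides n, there exist elements x1, x2, x3, x4, x5, x6, x7 of the finite field F_p, all nonzero, such that x1^2 + x2^2 + x3^3 + x4^3 + x5^5 + x6^6 + x7^c = n in F_p. -/
open MeasureTheory Finset

noncomputable section

/-- `e(x) = exp(2πix)`. -/
def e (x : ℝ) : ℂ := Complex.exp (2 * Real.pi * Complex.I * x)

/-- `P_k = n^(1/k)`. -/
def P (n k : ℕ) : ℝ := (n : ℝ) ^ ((k : ℝ))⁻¹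

/-- `θ_6 = 5/6`, `θ_7 = 87/98`. -/
def θ (c : ℕ) : ℝ := if c = 6 then 5 / 6 else 87 / 98

/-- `Θ_c = 2/3 + θ_c/5 + 1/6 + 1/c`. -/
def Θ (c : ℕ) : ℝ := 2 / 3 + θ c / 5 + 1 / 6 + ((c : ℝ))⁻¹

/-- `f_k(α) = Σ_{P_k/2 < p ≤ P_k, p prime} e(α p^k) log p`. -/
def f (n k : ℕ) (α : ℝ) : ℂ :=
  ∑ p ∈ (Finset.range (n + 1)).filter
      (fun p : ℕ => p.Prime ∧ P n k / 2 < (p : ℝ) ∧ (p : ℝ) ≤ P n k),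
    e (α * (p : ℝ) ^ k) * (Real.log p)

/-- `f_{5,c}(α) = Σ_{1 < p ≤ P_5^{θ_c}, p prime} e(α p^5) log p`. -/
def f5 (n c : ℕ) (α : ℝ) : ℂ :=
  ∑ p ∈ (Finset.range (n + 1)).filter
      (fun p : ℕ => p.Prime ∧ 1 < (p : ℝ) ∧ (p : ℝ) ≤ P n 5 ^ θ c),
    e (α * (p : ℝ) ^ 5) * (Real.log p)

/-- `F_c(α) = f_2(α)^2 f_3(α)^2 f_{5,c}(α) f_6(α) f_c(α)`. -/
def F (n c : ℕ) (α : ℝ) : ℂ :=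
  f n 2 α ^ 2 * f n 3 α ^ 2 * f5 n c α * f n 6 α * f n c α

/-- `S_k(q,a) = Σ_{x=1,(x,q)=1}^{q} e(a x^k / q)`. -/
def S (k q a : ℕ) : ℂ :=
  ∑ x ∈ (Finset.Icc 1 q).filter (fun x => Nat.gcd x q = 1),
    e ((a : ℝ) * (x : ℝ) ^ k / q)

/-- `v_k(β) = (1/k) Σ_{2^{-k} n < m ≤ n} m^{1/k-1} e(β m)`. -/
def v (n k : ℕ) (β : ℝ) : ℂ :=
  ((k : ℂ))⁻¹ *
    ∑ m ∈ (Finset.Icc 1 n).filter (fun m : ℕ => (n : ℝ) / 2 ^ k < (m : ℝ)),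
      ((m : ℝ) ^ ((k : ℝ)⁻¹ - 1) : ℝ) * e (β * m)

/-- `w_c(β) = v_2(β)^2 v_3(β)^2 v_6(β) v_c(β)`. -/
def w (n c : ℕ) (β : ℝ) : ℂ := v n 2 β ^ 2 * v n 3 β ^ 2 * v n 6 β * v n c β

/-- `U_c(q,a) = S_2(q,a)^2 S_3(q,a)^2 S_5(q,a) S_6(q,a) S_c(q,a)`. -/
def U (c q a : ℕ) : ℂ := S 2 q a ^ 2 * S 3 q a ^ 2 * S 5 q a * S 6 q a * S c q a

/-- `A_{n,c}(q) = Σ_{a=1,(a,q)=1}^{q} U_c(q,a) e(-a n / q)`. -/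
def A (n : ℤ) (c q : ℕ) : ℂ :=
  ∑ a ∈ (Finset.Icc 1 q).filter (fun a => Nat.gcd a q = 1),
    U c q a * e (-((a : ℝ) * (n : ℝ)) / q)

/-- The major arcs `𝔐`. -/
def Maj (n : ℕ) (B : ℝ) : Set ℝ :=
  {α | α ∈ Set.Icc (0 : ℝ) 1 ∧ ∃ a q : ℕ, a ≤ q ∧ 1 ≤ q ∧
    (q : ℝ) ≤ Real.log n ^ B ∧ Nat.gcd a q = 1 ∧
    |α - (a : ℝ) / q| ≤ Real.log n ^ B / n}

/-- `Q_c = n^{2/(3c²(c-1))}`. -/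
def Q (n c : ℕ) : ℝ := (n : ℝ) ^ (2 / (3 * (c : ℝ) ^ 2 * ((c : ℝ) - 1)))

/-- The arcs `𝕽_c`. -/
def R (n c : ℕ) : Set ℝ :=
  {α | α ∈ Set.Icc (0 : ℝ) 1 ∧ ∃ a q : ℕ, a ≤ q ∧ 1 ≤ q ∧
    (q : ℝ) ≤ Q n c ∧ Nat.gcd a q = 1 ∧ |(q : ℝ) * α - a| ≤ Q n c / n}

/-- `τ = 2^{-20}`. -/
def τ : ℝ := ((2 : ℝ) ^ (20 : ℕ))⁻¹

/-- The sets `𝓔_c`. -/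
def E (n c : ℕ) : Set ℝ :=
  {α | α ∈ Set.Icc (0 : ℝ) 1 ∧
    ‖f n c α‖ ≤ P n c ^ (if c = 6 then 1 - 24 * τ else 139 / 140 - 24 * τ)}

end


open Pointwise in
private lemma fiber_card' (p k : ℕ) [Fact p.Prime] (hk : 0 < k) (b : ZMod p) :
    #{a ∈ (Finset.univ : Finset (ZMod p)) | a ^ k = b} ≤ k := by
  classical
  have hsub : {a ∈ (Finset.univ : Finset (ZMod p)) | a ^ k = b}
      ⊆ (Polynomial.nthRoots k b).toFinset := by
    intro x hx
    simp only [Finset.mem_filter] at hx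
    rw [Multiset.mem_toFinset, Polynomial.mem_nthRoots hk]
    exact hx.2
  calc #{a ∈ (Finset.univ : Finset (ZMod p)) | a ^ k = b}
      ≤ (Polynomial.nthRoots k b).toFinset.card := Finset.card_le_card hsub
    _ ≤ Multiset.card (Polynomial.nthRoots k b) := Multiset.toFinset_card_le _
    _ ≤ k := Polynomial.card_nthRoots k b

private lemma pow_image_card' (p k : ℕ) [Fact p.Prime] (hk : 0 < k) :
    p - 1 ≤ k * #(((Finset.univ : Finset (ZMod p)) \ {0}).image (· ^ k)) := by
  classical
  have h := Finset.card_le_mul_card_image (f := (· ^ k))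
    ((Finset.univ : Finset (ZMod p)) \ {0}) k (fun b _ => by
      calc #{a ∈ (Finset.univ : Finset (ZMod p)) \ {0} | a ^ k = b}
          ≤ #{a ∈ (Finset.univ : Finset (ZMod p)) | a ^ k = b} :=
            Finset.card_le_card (Finset.filter_subset_filter _ (Finset.sdiff_subset))
        _ ≤ k := fiber_card' p k hk b)
  have hcard : #((Finset.univ : Finset (ZMod p)) \ {0}) = p - 1 := by
    rw [Finset.card_sdiff_of_subset (by simp), Finset.card_singleton, Finset.card_univ, ZMod.card]
  omega

open Pointwise in
private lemma key' (p : ℕ) (hp : p.Prime) (hp11 : 11 ≤ p) (m : ZMod p) :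
    ∃ a b c : ZMod p, a ≠ 0 ∧ b ≠ 0 ∧ c ≠ 0 ∧ a ^ 2 + b ^ 2 + c ^ 3 = m := by
  classical
  haveI := Fact.mk hp
  set s : Finset (ZMod p) := (Finset.univ : Finset (ZMod p)) \ {0} with hs
  set A := s.image (· ^ 2) with hA
  set B := s.image (· ^ 3) with hB
  have h1s : (1 : ZMod p) ∈ s := by
    simp [hs, one_ne_zero]
  have hAne : A.Nonempty := Finset.Nonempty.image ⟨1, h1s⟩ _
  have hBne : B.Nonempty := Finset.Nonempty.image ⟨1, h1s⟩ _
  have hAcard : p - 1 ≤ 2 * #A := pow_image_card' p 2 (by norm_num)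
  have hBcard : p - 1 ≤ 3 * #B := pow_image_card' p 3 (by norm_num)
  have hAA := ZMod.cauchy_davenport hp hAne hAne
  have hAAne : (A + A).Nonempty := hAne.add hAne
  have hAAB := ZMod.cauchy_davenport hp hAAne hBne
  have hcard : p ≤ #(A + A + B) := by
    have h1 : p - 2 ≤ #(A + A) := by omega
    omega
  have huniv : A + A + B = Finset.univ := by
    apply Finset.eq_univ_of_card
    have : #(A + A + B) ≤ Fintype.card (ZMod p) := Finset.card_le_univ _
    rw [ZMod.card] at *
    omega
  have hm : m ∈ A + A + B := huniv ▸ Finset.mem_univ m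
  rw [Finset.mem_add] at hm
  obtain ⟨y, hy, z, hz, hyz⟩ := hm
  rw [Finset.mem_add] at hy
  obtain ⟨u, hu, v, hv, huv⟩ := hy
  rw [hA, Finset.mem_image] at hu hv
  obtain ⟨a, ha, rfl⟩ := hu
  obtain ⟨b, hb, rfl⟩ := hv
  rw [hB, Finset.mem_image] at hz
  obtain ⟨c, hc, rfl⟩ := hz
  simp only [hs, Finset.mem_sdiff, Finset.mem_singleton] at ha hb hc
  exact ⟨a, b, c, ha.2, hb.2, hc.2, by rw [← hyz, ← huv]⟩

private lemma cover5' : ∀ m : ZMod 5, ∃ a b d : ZMod 5, a ≠ 0 ∧ b ≠ 0 ∧ d ≠ 0 ∧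
    a ^ 2 + b ^ 2 + d ^ 3 = m := by decide

private lemma cover7' : ∀ m : ZMod 7, ∃ a b d : ZMod 7, a ≠ 0 ∧ b ≠ 0 ∧ d ≠ 0 ∧
    a ^ 2 + b ^ 2 + d ^ 3 = m := by decide

private lemma small26 : ∀ m : ZMod 2, (2 = 2 → m ≠ 0) → ∃ x1 x2 x3 x4 x5 x6 x7 : ZMod 2,
    x1 ≠ 0 ∧ x2 ≠ 0 ∧ x3 ≠ 0 ∧ x4 ≠ 0 ∧ x5 ≠ 0 ∧ x6 ≠ 0 ∧ x7 ≠ 0 ∧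
    x1 ^ 2 + x2 ^ 2 + x3 ^ 3 + x4 ^ 3 + x5 ^ 5 + x6 ^ 6 + x7 ^ 6 = m := by decide

private lemma small27 : ∀ m : ZMod 2, (2 = 2 → m ≠ 0) → ∃ x1 x2 x3 x4 x5 x6 x7 : ZMod 2,
    x1 ≠ 0 ∧ x2 ≠ 0 ∧ x3 ≠ 0 ∧ x4 ≠ 0 ∧ x5 ≠ 0 ∧ x6 ≠ 0 ∧ x7 ≠ 0 ∧
    x1 ^ 2 + x2 ^ 2 + x3 ^ 3 + x4 ^ 3 + x5 ^ 5 + x6 ^ 6 + x7 ^ 7 = m := by decide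

private lemma small36 : ∀ m : ZMod 3, (3 = 2 → m ≠ 0) → ∃ x1 x2 x3 x4 x5 x6 x7 : ZMod 3,
    x1 ≠ 0 ∧ x2 ≠ 0 ∧ x3 ≠ 0 ∧ x4 ≠ 0 ∧ x5 ≠ 0 ∧ x6 ≠ 0 ∧ x7 ≠ 0 ∧
    x1 ^ 2 + x2 ^ 2 + x3 ^ 3 + x4 ^ 3 + x5 ^ 5 + x6 ^ 6 + x7 ^ 6 = m := by decide

private lemma small37 : ∀ m : ZMod 3, (3 = 2 → m ≠ 0) → ∃ x1 x2 x3 x4 x5 x6 x7 : ZMod 3,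
    x1 ≠ 0 ∧ x2 ≠ 0 ∧ x3 ≠ 0 ∧ x4 ≠ 0 ∧ x5 ≠ 0 ∧ x6 ≠ 0 ∧ x7 ≠ 0 ∧
    x1 ^ 2 + x2 ^ 2 + x3 ^ 3 + x4 ^ 3 + x5 ^ 5 + x6 ^ 6 + x7 ^ 7 = m := by decide

/-- Solvability of the congruence `x1²+x2²+x3³+x4³+x5⁵+x6⁶+x7^c ≡ n (mod p)`
with all variables nonzero, except when `p = 2` and `2 ∣ n`. -/
theorem local_solubility (c : ℕ) (hc : c = 6 ∨ c = 7) (p : ℕ) (hp : p.Prime)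
    (n : ℤ) (h : ¬ (p = 2 ∧ 2 ∣ n)) :
    ∃ x1 x2 x3 x4 x5 x6 x7 : ZMod p,
      x1 ≠ 0 ∧ x2 ≠ 0 ∧ x3 ≠ 0 ∧ x4 ≠ 0 ∧ x5 ≠ 0 ∧ x6 ≠ 0 ∧ x7 ≠ 0 ∧
      x1 ^ 2 + x2 ^ 2 + x3 ^ 3 + x4 ^ 3 + x5 ^ 5 + x6 ^ 6 + x7 ^ c = (n : ZMod p) := by
  haveI := Fact.mk hp
  by_cases hp11 : 11 ≤ p
  · obtain ⟨a, b, d, ha, hb, hd, habd⟩ := key' p hp hp11 ((n : ZMod p) - 4)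
    refine ⟨a, b, d, 1, 1, 1, 1, ha, hb, hd, one_ne_zero, one_ne_zero, one_ne_zero,
      one_ne_zero, ?_⟩
    rw [one_pow, one_pow, one_pow, one_pow]
    linear_combination habd
  · push_neg at hp11
    have h2 := hp.two_le
    have hn : p = 2 → ((n : ZMod p)) ≠ 0 := by
      rintro rfl hh
      rw [ZMod.intCast_zmod_eq_zero_iff_dvd] at hh
      exact h ⟨rfl, by exact_mod_cast hh⟩
    rcases hc with rfl | rfl <;>
    · revert hn
      generalize ((n : ZMod p)) = m
      clear h
      clear n
      revert m
      interval_cases p <;> first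
        | exact absurd hp (by decide)
        | exact small26
        | exact small27
        | exact small36
        | exact small37
        | (refine fun (m : ZMod 5) _ => ?_
           obtain ⟨a, b, d, ha, hb, hd, hh⟩ := cover5' (m - 4)
           exact ⟨a, b, d, 1, 1, 1, 1, ha, hb, hd, one_ne_zero, one_ne_zero, one_ne_zero,
             one_ne_zero, by linear_combination hh⟩)
        | (refine fun (m : ZMod 7) _ => ?_
           obtain ⟨a, b, d, ha, hb, hd, hh⟩ := cover7' (m - 4)
           exact ⟨a, b, d, 1, 1, 1, 1, ha, hb, hd, one_ne_zero, one_ne_zero, one_ne_zero,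
             one_ne_zero, by linear_combination hh⟩)
end

section
/- For every ε > 0 there exists a constant C > 0 such that for every positive integer m, the number of ordered pairs (z1, z2) of positive integers with z1^5 + z2^5 = m is at most C · m^{ε}. -/
open MeasureTheory Finset

lemma tau_bound (ε : ℝ) (hε : 0 < ε) :
    ∃ C : ℝ, 0 < C ∧ ∀ m : ℕ, 0 < m →
      ((m.divisors.card : ℝ)) ≤ C * (m : ℝ) ^ ε := by
  set L : ℝ := Real.log 2 with hL
  have hLpos : 0 < L := Real.log_pos one_lt_two
  set K : ℝ := 1 + 1 / (ε * L) with hK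
  have hK1 : 1 ≤ K := by
    rw [hK]
    have : 0 < 1 / (ε * L) := by positivity
    linarith
  set B : ℕ := ⌈(2 : ℝ) ^ (1 / ε)⌉₊ + 1 with hB
  refine ⟨K ^ B, by positivity, ?_⟩
  intro m hm
  have hm0 : m ≠ 0 := hm.ne'
  set S := m.primeFactors with hS
  set k : ℕ → ℕ := fun p => m.factorization p with hk
  have h1 : (m.divisors.card : ℝ) = ∏ p ∈ S, ((k p : ℝ) + 1) := by
    rw [Nat.card_divisors hm0]
    push_cast
    rfl
  have h2 : (m : ℝ) = ∏ p ∈ S, (p : ℝ) ^ (k p) := by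
    conv_lhs => rw [← Nat.factorization_prod_pow_eq_self hm0]
    rw [Finsupp.prod, Nat.support_factorization]
    push_cast
    rfl
  have h3 : (m : ℝ) ^ ε = ∏ p ∈ S, ((p : ℝ) ^ (k p)) ^ ε := by
    rw [h2, Real.finset_prod_rpow S _ (fun p _ => by positivity) ε]
  set c : ℕ → ℝ := fun p => if ((p : ℝ)) ^ ε < 2 then K else 1 with hc
  have hpoint : ∀ p ∈ S, ((k p : ℝ) + 1) ≤ c p * ((p : ℝ) ^ (k p)) ^ ε := by
    intro p hp
    have hpp : p.Prime := Nat.prime_of_mem_primeFactors hp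
    have hp2 : (2 : ℝ) ≤ (p : ℝ) := by exact_mod_cast hpp.two_le
    have hppos : (0 : ℝ) < p := by linarith
    have hrw : ((p : ℝ) ^ (k p)) ^ ε = ((p : ℝ) ^ ε) ^ (k p) := by
      rw [← Real.rpow_natCast (p : ℝ) (k p), ← Real.rpow_mul hppos.le,
        mul_comm, Real.rpow_mul hppos.le, Real.rpow_natCast]
    have h2e : (2 : ℝ) ^ (ε * k p) ≤ ((p : ℝ) ^ (k p)) ^ ε := by
      have hl : (2 : ℝ) ^ (ε * k p) = ((2 : ℝ) ^ ε) ^ (k p) := by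
        rw [← Real.rpow_natCast ((2:ℝ) ^ ε) (k p), ← Real.rpow_mul (by norm_num)]
      rw [hl, hrw]
      exact pow_le_pow_left₀ (by positivity)
        (Real.rpow_le_rpow (by norm_num) hp2 hε.le) _
    by_cases hsmall : ((p : ℝ)) ^ ε < 2
    · have hexp : (2 : ℝ) ^ (ε * k p) = Real.exp (ε * k p * L) := by
        rw [Real.rpow_def_of_pos (by norm_num : (0:ℝ) < 2), ← hL, mul_comm]
      have hge : 1 + ε * k p * L ≤ (2 : ℝ) ^ (ε * k p) := by
        rw [hexp]
        linarith [Real.add_one_le_exp (ε * k p * L)]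
      have expand : K * (1 + ε * k p * L) = 1 + (k p : ℝ) + ε * k p * L + 1/(ε*L) := by
        rw [hK]
        field_simp
        ring
      have key : ((k p : ℝ) + 1) ≤ K * (2 : ℝ) ^ (ε * k p) := by
        have h5 : K * (1 + ε * k p * L) ≤ K * (2:ℝ) ^ (ε * k p) :=
          mul_le_mul_of_nonneg_left hge (by linarith)
        have h6 : (0:ℝ) ≤ ε * k p * L := by positivity
        have h7 : (0:ℝ) ≤ 1/(ε*L) := by positivity
        have h8 : ((k p : ℝ) + 1) ≤ K * (1 + ε * k p * L) := by
          rw [expand]; linarith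
        exact h8.trans h5
      calc ((k p : ℝ) + 1) ≤ K * (2:ℝ) ^ (ε * k p) := key
        _ ≤ K * ((p:ℝ) ^ (k p)) ^ ε := mul_le_mul_of_nonneg_left h2e (by linarith)
        _ = c p * ((p:ℝ) ^ (k p)) ^ ε := by simp only [hc, if_pos hsmall]
    · push_neg at hsmall
      have h1k : ((k p : ℝ) + 1) ≤ (2:ℝ) ^ (k p : ℕ) := by
        have h := Nat.lt_two_pow_self (n := k p)
        have h' : (k p + 1 : ℕ) ≤ 2 ^ (k p) := h
        exact_mod_cast h'
      have hbig : ((2:ℝ)) ^ (k p : ℕ) ≤ ((p:ℝ) ^ ε) ^ (k p) :=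
        pow_le_pow_left₀ (by norm_num) hsmall _
      simp only [hc, if_neg (not_lt.mpr hsmall), one_mul, hrw]
      exact h1k.trans hbig
  have hmain : (m.divisors.card : ℝ) ≤ (∏ p ∈ S, c p) * (m : ℝ) ^ ε := by
    rw [h1, h3, ← Finset.prod_mul_distrib]
    exact Finset.prod_le_prod (fun p _ => by positivity) hpoint
  have hcprod : (∏ p ∈ S, c p) ≤ K ^ B := by
    have hsub : S.filter (fun p : ℕ => ((p:ℝ)) ^ ε < 2) ⊆ Finset.range B := by
      intro p hp
      simp only [Finset.mem_filter] at hp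
      have hpp : p.Prime := Nat.prime_of_mem_primeFactors hp.1
      have hppos : (0:ℝ) < p := by exact_mod_cast hpp.pos
      have hlt : (p : ℝ) < (2:ℝ) ^ (1/ε) := by
        have h := Real.rpow_lt_rpow (by positivity) hp.2 (by positivity : (0:ℝ) < 1/ε)
        rwa [← Real.rpow_mul hppos.le, mul_one_div, div_self hε.ne', Real.rpow_one] at h
      have hle : (p : ℝ) ≤ ⌈(2:ℝ) ^ (1/ε)⌉₊ := hlt.le.trans (Nat.le_ceil _)
      have : p ≤ ⌈(2:ℝ) ^ (1/ε)⌉₊ := by exact_mod_cast hle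
      simp only [Finset.mem_range, hB]
      omega
    have hsplit := (Finset.prod_filter_mul_prod_filter_not S
      (fun p : ℕ => ((p:ℝ)) ^ ε < 2) c).symm
    have hone : (∏ p ∈ S.filter (fun p : ℕ => ¬((p:ℝ)) ^ ε < 2), c p) = 1 :=
      Finset.prod_eq_one (fun p hp => by
        simp only [Finset.mem_filter] at hp
        simp only [hc, if_neg hp.2])
    have hKs : (∏ p ∈ S.filter (fun p : ℕ => ((p:ℝ)) ^ ε < 2), c p)
        = K ^ (S.filter (fun p : ℕ => ((p:ℝ)) ^ ε < 2)).card := by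
      rw [Finset.prod_congr rfl (fun p hp => ?_), Finset.prod_const]
      simp only [Finset.mem_filter] at hp
      simp only [hc, if_pos hp.2]
    rw [hsplit, hone, mul_one, hKs]
    exact pow_le_pow_right₀ (by linarith)
      ((Finset.card_le_card hsub).trans (by simp))
  have hmnn : (0:ℝ) ≤ (m:ℝ) ^ ε := by positivity
  calc (m.divisors.card : ℝ) ≤ (∏ p ∈ S, c p) * (m:ℝ)^ε := hmain
    _ ≤ K ^ B * (m:ℝ)^ε := mul_le_mul_of_nonneg_right hcprod hmnn


lemma sum_mem_divisors (m x y : ℕ) (hm : 0 < m) (hx : 0 < x)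
    (h : x ^ 5 + y ^ 5 = m) : x + y ∈ m.divisors := by
  refine Nat.mem_divisors.mpr ⟨?_, hm.ne'⟩
  have hZ : ((x : ℤ) + y) ∣ (m : ℤ) := by
    refine ⟨(x:ℤ)^4 - (x:ℤ)^3*y + (x:ℤ)^2*(y:ℤ)^2 - (x:ℤ)*(y:ℤ)^3 + (y:ℤ)^4, ?_⟩
    have hc : ((x:ℤ))^5 + (y:ℤ)^5 = (m:ℤ) := by exact_mod_cast h
    linear_combination -hc
  exact_mod_cast hZ

lemma rep_card_le (m : ℕ) (hm : 0 < m) :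
    Nat.card {z : ℕ × ℕ // 0 < z.1 ∧ 0 < z.2 ∧ z.1 ^ 5 + z.2 ^ 5 = m} ≤
      m.divisors.card * 4 := by
  have key : Function.Injective
      (fun z : {z : ℕ × ℕ // 0 < z.1 ∧ 0 < z.2 ∧ z.1 ^ 5 + z.2 ^ 5 = m} =>
        ((⟨z.1.1 + z.1.2, sum_mem_divisors m z.1.1 z.1.2 hm z.2.1 z.2.2.2⟩ :
            {d : ℕ // d ∈ m.divisors}),
          decide (2 * (z.1.1 * z.1.2) ≤ (z.1.1 + z.1.2) ^ 2),
          decide (z.1.1 ≤ z.1.2))) := by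
    rintro ⟨⟨x, y⟩, hx, hy, hxy⟩ ⟨⟨x', y'⟩, hx', hy', hxy'⟩ h
    simp only [Prod.mk.injEq, Subtype.mk.injEq, decide_eq_decide] at h
    obtain ⟨hs, hb1, hb2⟩ := h
    have hZ : ((x:ℤ)+y)^5 - 5*((x:ℤ)+y)^3*((x:ℤ)*y) + 5*((x:ℤ)+y)*((x:ℤ)*y)^2
        = (m:ℤ) := by
      have hc : ((x:ℤ))^5 + (y:ℤ)^5 = (m:ℤ) := by exact_mod_cast hxy
      linear_combination hc
    have hZ' : ((x':ℤ)+y')^5 - 5*((x':ℤ)+y')^3*((x':ℤ)*y')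
        + 5*((x':ℤ)+y')*((x':ℤ)*y')^2 = (m:ℤ) := by
      have hc : ((x':ℤ))^5 + (y':ℤ)^5 = (m:ℤ) := by exact_mod_cast hxy'
      linear_combination hc
    have hsZ : ((x:ℤ)+y) = ((x':ℤ)+y') := by exact_mod_cast hs
    rw [← hsZ] at hZ'
    have h0 : 5*((x:ℤ)+y) * (((x:ℤ)*y) - ((x':ℤ)*y'))
        * (((x:ℤ)*y) + ((x':ℤ)*y') - ((x:ℤ)+y)^2) = 0 := by
      linear_combination hZ - hZ'
    have hspos : (0:ℤ) < (x:ℤ)+y := by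
      have : 0 < x + y := by omega
      exact_mod_cast this
    have hpp' : (x:ℤ)*y = (x':ℤ)*y' := by
      rcases mul_eq_zero.mp h0 with h1 | h1
      · rcases mul_eq_zero.mp h1 with h2 | h2
        · exfalso; linarith
        · linarith [sub_eq_zero.mp h2]
      · have hb1Z : 2*((x:ℤ)*y) ≤ ((x:ℤ)+y)^2 ↔
            2*((x':ℤ)*y') ≤ ((x':ℤ)+y')^2 := by exact_mod_cast hb1
        rw [← hsZ] at hb1Z
        by_cases hcc : 2*((x:ℤ)*y) ≤ ((x:ℤ)+y)^2
        · have := hb1Z.mp hcc; linarith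
        · have h3 := mt hb1Z.mpr hcc
          push_neg at hcc h3
          linarith
    have hq : ((x:ℤ) - x') * ((x:ℤ) - y') = 0 := by
      linear_combination (x:ℤ) * hsZ - hpp'
    have hor : x = x' ∨ x = y' := by
      rcases mul_eq_zero.mp hq with h1 | h1 <;>
        [left; right] <;> exact_mod_cast sub_eq_zero.mp h1
    apply Subtype.ext
    simp only [Prod.mk.injEq]
    omega
  have hle := Nat.card_le_card_of_injective _ key
  have hT : Nat.card ({d : ℕ // d ∈ m.divisors} × Bool × Bool)
      = m.divisors.card * 4 := by
    have h1 : Nat.card {d : ℕ // d ∈ m.divisors} = m.divisors.card := by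
      rw [Nat.card_eq_fintype_card]; exact Fintype.card_coe _
    rw [Nat.card_prod, h1, Nat.card_prod]
    simp [Nat.card_eq_fintype_card]
  omega

/-- The number of representations `m = z1⁵ + z2⁵` in positive integers is `≪ m^ε`. -/
theorem fifth_power_representations (ε : ℝ) (hε : 0 < ε) :
    ∃ C : ℝ, 0 < C ∧ ∀ m : ℕ, 0 < m →
      (Nat.card {z : ℕ × ℕ // 0 < z.1 ∧ 0 < z.2 ∧ z.1 ^ 5 + z.2 ^ 5 = m} : ℝ) ≤
        C * (m : ℝ) ^ ε := by
  obtain ⟨C0, hC0, hC⟩ := tau_bound ε hε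
  refine ⟨4 * C0, by positivity, ?_⟩
  intro m hm
  have h1 := rep_card_le m hm
  have h2 := hC m hm
  calc (Nat.card {z : ℕ × ℕ // 0 < z.1 ∧ 0 < z.2 ∧ z.1 ^ 5 + z.2 ^ 5 = m} : ℝ)
      ≤ ((m.divisors.card * 4 : ℕ) : ℝ) := by exact_mod_cast h1
    _ = 4 * (m.divisors.card : ℝ) := by push_cast; ring
    _ ≤ 4 * (C0 * (m : ℝ) ^ ε) := by linarith
    _ = 4 * C0 * (m : ℝ) ^ ε := by ring
end

section
/- For every ε > 0 there exists a constant C > 0 such that for every sufficiently large integer n, J_3 = ∫_0^1 |f_2(α)|^2 |f_3(α)|^4 dα ≤ C · n^{4/3 + ε}. More precisely, the number of 6-tuples (x1, x2, h1, h2, h3, h4) of positive integers with x1^2 − x2^2 = h1^3 + h2^3 − h3^3 − h4^3, 1 ≤ x1, x2 ≤ P_2 and 1 ≤ h_i ≤ P_3 (i = 1,...,4) is ≤ C · (P_2 · P_3^{2+ε} + P_2^{ε} · P_3^{4}). -/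
open MeasureTheory Finset

lemma divisor_bound {δ : ℝ} (hδ : 0 < δ) :
    ∃ C : ℝ, 1 ≤ C ∧ ∀ m : ℕ, m ≠ 0 → (m.divisors.card : ℝ) ≤ C * (m : ℝ) ^ δ := by
  have hlog2 : (0:ℝ) < Real.log 2 := Real.log_pos one_lt_two
  set c0 : ℝ := max 2 (2 / (δ * Real.log 2)) with hc0
  have hc0_ge : (2:ℝ) ≤ c0 := le_max_left _ _
  have hc0_one : (1:ℝ) ≤ c0 := by linarith
  set B : ℕ := ⌈(2:ℝ) ^ (1/δ)⌉₊ + 1 with hB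
  refine ⟨c0 ^ B, one_le_pow₀ hc0_one, ?_⟩
  intro m hm
  -- express m^δ as a product over prime factors
  have hmprod : (m : ℝ) = ∏ p ∈ m.primeFactors, ((p : ℝ) ^ (m.factorization p)) := by
    conv_lhs => rw [← Nat.factorization_prod_pow_eq_self hm]
    rw [Nat.prod_factorization_eq_prod_primeFactors]
    push_cast
    rfl
  have hrpow : (m : ℝ) ^ δ = ∏ p ∈ m.primeFactors, ((p:ℝ) ^ (m.factorization p * δ)) := by
    rw [hmprod, ← Real.finset_prod_rpow _ _ (fun i _ => by positivity) δ]
    refine Finset.prod_congr rfl fun p hp => ?_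
    rw [← Real.rpow_natCast (p:ℝ) (m.factorization p), ← Real.rpow_mul (by positivity)]
  rw [Nat.card_divisors hm]
  push_cast
  have key : ∀ p ∈ m.primeFactors,
      ((m.factorization p : ℝ) + 1) ≤
        (if (p:ℝ) ^ δ < 2 then c0 else 1) * (p:ℝ) ^ (m.factorization p * δ) := by
    intro p hp
    have hp2 : 2 ≤ p := (Nat.prime_of_mem_primeFactors hp).two_le
    have hp2R : (2:ℝ) ≤ (p:ℝ) := by exact_mod_cast hp2
    have ha1 : 1 ≤ m.factorization p := (Nat.Prime.factorization_pos_of_dvd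
      (Nat.prime_of_mem_primeFactors hp) hm (Nat.dvd_of_mem_primeFactors hp))
    set a := m.factorization p with hadef
    have haR : (1:ℝ) ≤ (a:ℝ) := by exact_mod_cast ha1
    have hbase : (2:ℝ) ^ ((a:ℝ) * δ) ≤ (p:ℝ) ^ ((a:ℝ) * δ) :=
      Real.rpow_le_rpow (by norm_num) hp2R (by positivity)
    by_cases hsmall : (p:ℝ) ^ δ < 2
    · rw [if_pos hsmall]
      have h2 : (a:ℝ) * δ * Real.log 2 ≤ (2:ℝ) ^ ((a:ℝ) * δ) := by
        rw [Real.rpow_def_of_pos (by norm_num)]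
        calc (a:ℝ) * δ * Real.log 2 = Real.log 2 * ((a:ℝ)*δ) := by ring
        _ ≤ Real.log 2 * ((a:ℝ)*δ) + 1 := by linarith
        _ ≤ Real.exp (Real.log 2 * ((a:ℝ)*δ)) := Real.add_one_le_exp _
      have h3 : (2 / (δ * Real.log 2)) * ((a:ℝ) * δ * Real.log 2) = 2 * a := by
        field_simp
      have hc0' : 2 / (δ * Real.log 2) ≤ c0 := le_max_right _ _
      have hnn : (0:ℝ) ≤ (a:ℝ) * δ * Real.log 2 := by positivity
      calc ((a:ℝ) + 1) ≤ 2 * a := by linarith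
      _ = (2 / (δ * Real.log 2)) * ((a:ℝ) * δ * Real.log 2) := h3.symm
      _ ≤ c0 * ((a:ℝ) * δ * Real.log 2) := mul_le_mul_of_nonneg_right hc0' hnn
      _ ≤ c0 * ((2:ℝ) ^ ((a:ℝ) * δ)) := by
          apply mul_le_mul_of_nonneg_left h2 (by linarith)
      _ ≤ c0 * ((p:ℝ) ^ ((a:ℝ) * δ)) := by
          apply mul_le_mul_of_nonneg_left _ (by linarith)
          exact_mod_cast hbase
    · rw [if_neg hsmall, one_mul]
      push_neg at hsmall
      have : ((a:ℝ) + 1) ≤ (2:ℝ) ^ (a:ℕ) := by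
        have := @Nat.lt_two_pow_self a
        have : (a:ℝ) + 1 ≤ ((2^a : ℕ) : ℝ) := by exact_mod_cast this
        simpa using this
      calc ((a:ℝ) + 1) ≤ (2:ℝ) ^ (a:ℕ) := this
      _ ≤ ((p:ℝ) ^ δ) ^ (a:ℕ) := pow_le_pow_left₀ (by norm_num) hsmall a
      _ = (p:ℝ) ^ ((a:ℝ) * δ) := by
          rw [← Real.rpow_natCast ((p:ℝ)^δ) a, ← Real.rpow_mul (by positivity), mul_comm]
  calc (∏ p ∈ m.primeFactors, ((m.factorization p : ℝ) + 1))
      ≤ ∏ p ∈ m.primeFactors,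
          ((if (p:ℝ) ^ δ < 2 then c0 else 1) * (p:ℝ) ^ (m.factorization p * δ)) := by
        apply Finset.prod_le_prod (fun p _ => by positivity) key
    _ = (∏ p ∈ m.primeFactors, (if (p:ℝ) ^ δ < 2 then c0 else 1)) *
          ∏ p ∈ m.primeFactors, (p:ℝ) ^ (m.factorization p * δ) := Finset.prod_mul_distrib
    _ ≤ c0 ^ B * (m:ℝ) ^ δ := by
        rw [← hrpow]
        apply mul_le_mul_of_nonneg_right _ (by positivity)
        rw [Finset.prod_ite, Finset.prod_const, Finset.prod_const, one_pow, mul_one]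
        have hsub : m.primeFactors.filter (fun p : ℕ => (p:ℝ) ^ δ < 2) ⊆ Finset.range B := by
          intro p hp
          simp only [Finset.mem_filter] at hp
          have hp2 : 2 ≤ p := (Nat.prime_of_mem_primeFactors hp.1).two_le
          have hpR : (0:ℝ) < (p:ℝ) := by positivity
          have : (p:ℝ) < (2:ℝ) ^ (1/δ) := by
            have := Real.rpow_lt_rpow (by positivity) hp.2 (by positivity : (0:ℝ) < 1/δ)
            rwa [← Real.rpow_mul (le_of_lt hpR), mul_one_div, div_self (ne_of_gt hδ),
              Real.rpow_one] at this
          have : p ≤ ⌈(2:ℝ) ^ (1/δ)⌉₊ := Nat.le_ceil ((2:ℝ)^(1/δ)) |> fun h => by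
            exact_mod_cast le_trans (le_of_lt this) h
          simp only [Finset.mem_range, hB]
          omega
        calc c0 ^ (m.primeFactors.filter (fun p : ℕ => (p:ℝ) ^ δ < 2)).card
            ≤ c0 ^ B := by
              apply pow_le_pow_right₀ hc0_one
              simpa using Finset.card_le_card hsub

def J3cond (n : ℕ) (t : ℕ × ℕ × ℕ × ℕ × ℕ × ℕ) : Prop :=
  (1 ≤ t.1 ∧ (t.1 : ℝ) ≤ P n 2) ∧
  (1 ≤ t.2.1 ∧ (t.2.1 : ℝ) ≤ P n 2) ∧
  (1 ≤ t.2.2.1 ∧ (t.2.2.1 : ℝ) ≤ P n 3) ∧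
  (1 ≤ t.2.2.2.1 ∧ (t.2.2.2.1 : ℝ) ≤ P n 3) ∧
  (1 ≤ t.2.2.2.2.1 ∧ (t.2.2.2.2.1 : ℝ) ≤ P n 3) ∧
  (1 ≤ t.2.2.2.2.2 ∧ (t.2.2.2.2.2 : ℝ) ≤ P n 3) ∧
  (t.1 : ℤ) ^ 2 - (t.2.1 : ℤ) ^ 2 =
    (t.2.2.1 : ℤ) ^ 3 + (t.2.2.2.1 : ℤ) ^ 3 - (t.2.2.2.2.1 : ℤ) ^ 3 - (t.2.2.2.2.2 : ℤ) ^ 3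

open scoped Classical in
noncomputable def J3F (n : ℕ) : Finset (ℕ × ℕ × ℕ × ℕ × ℕ × ℕ) :=
  (Finset.range (n+1) ×ˢ Finset.range (n+1) ×ˢ Finset.range (n+1) ×ˢ Finset.range (n+1)
    ×ˢ Finset.range (n+1) ×ˢ Finset.range (n+1)).filter (J3cond n)

lemma one_le_P {n : ℕ} (hn : 1 ≤ n) (k : ℕ) : 1 ≤ P n k := by
  apply Real.one_le_rpow (by exact_mod_cast hn) (by positivity)

lemma P_le_self {n k : ℕ} (hn : 1 ≤ n) (hk : 1 ≤ k) : P n k ≤ n := by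
  have h1 : (1:ℝ) ≤ (n:ℝ) := by exact_mod_cast hn
  calc P n k ≤ (n:ℝ) ^ (1:ℝ) := by
        apply Real.rpow_le_rpow_of_exponent_le h1
        rw [inv_le_one_iff₀]
        right; exact_mod_cast hk
  _ = n := Real.rpow_one _

lemma P_cube (n : ℕ) : P n 3 ^ (3:ℕ) = n := by
  rw [← Real.rpow_natCast (P n 3) 3, P, ← Real.rpow_mul (by positivity)]
  norm_num

lemma cube_le_n {n h : ℕ} (hh : (h:ℝ) ≤ P n 3) : h^3 ≤ n := by
  have : (h:ℝ)^(3:ℕ) ≤ P n 3 ^ (3:ℕ) := by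
    apply pow_le_pow_left₀ (by positivity) hh
  rw [P_cube] at this
  exact_mod_cast this

set_option maxHeartbeats 1000000 in
lemma J3count {ε : ℝ} (hε : 0 < ε) :
    ∃ C : ℝ, 1 ≤ C ∧ ∀ n : ℕ, 1 ≤ n →
      ((J3F n).card : ℝ) ≤ C * (P n 2 * P n 3 ^ ((2:ℝ)+ε) + P n 2 ^ ε * P n 3 ^ (4:ℕ)) := by
  classical
  obtain ⟨C, hC1, hC⟩ := divisor_bound (show (0:ℝ) < ε/6 by positivity)
  set K : ℝ := C * 2 ^ (ε/6) with hK
  have hK1 : 1 ≤ K := by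
    have : (1:ℝ) ≤ 2 ^ (ε/6) := Real.one_le_rpow (by norm_num) (by positivity)
    nlinarith
  refine ⟨2 * K, by linarith, fun n hn => ?_⟩
  have hn1 : (1:ℝ) ≤ (n:ℝ) := by exact_mod_cast hn
  set X : ℕ := ⌊P n 2⌋₊ with hXdef
  set H : ℕ := ⌊P n 3⌋₊ with hHdef
  have hXP : (X:ℝ) ≤ P n 2 := Nat.floor_le (le_trans zero_le_one (one_le_P hn 2))
  have hHP : (H:ℝ) ≤ P n 3 := Nat.floor_le (le_trans zero_le_one (one_le_P hn 3))
  set D : ℝ := C * (2*(n:ℝ)) ^ (ε/6) with hD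
  have hD0 : 0 < D := by
    apply mul_pos (by linarith)
    apply Real.rpow_pos_of_pos (by linarith)
  -- cube bounds for elements with real bound P n 3
  have hcube : ∀ h : ℕ, (h:ℝ) ≤ P n 3 → h^3 ≤ n := fun h hh => cube_le_n hh
  -- divisor count bound for any m ≠ 0 with m ≤ 2n
  have hdiv : ∀ m : ℕ, m ≠ 0 → m ≤ 2*n → ((m.divisors.card : ℝ)) ≤ D := by
    intro m hm0 hm2
    calc ((m.divisors.card : ℝ)) ≤ C * (m:ℝ) ^ (ε/6) := hC m hm0
    _ ≤ C * (2*(n:ℝ)) ^ (ε/6) := by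
        apply mul_le_mul_of_nonneg_left _ (by linarith)
        apply Real.rpow_le_rpow (by positivity) (by exact_mod_cast hm2 |>.trans_eq (by push_cast; ring)) (by positivity)
    _ = D := rfl
  have hmemJ : ∀ t ∈ J3F n, J3cond n t := fun t ht => (Finset.mem_filter.mp ht).2
  set H4 : Finset (ℕ×ℕ×ℕ×ℕ) :=
    Finset.Icc 1 H ×ˢ Finset.Icc 1 H ×ˢ Finset.Icc 1 H ×ˢ Finset.Icc 1 H with hH4
  set F1 : Finset (ℕ×ℕ×ℕ×ℕ×ℕ×ℕ) := (J3F n).filter (fun t => ¬ (t.1 = t.2.1)) with hF1def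
  set F0 : Finset (ℕ×ℕ×ℕ×ℕ×ℕ×ℕ) := (J3F n).filter (fun t => t.1 = t.2.1) with hF0def
  have hsplit : (J3F n).card = F0.card + F1.card :=
    (Finset.card_filter_add_card_filter_not (s := J3F n) (fun t : ℕ×ℕ×ℕ×ℕ×ℕ×ℕ => t.1 = t.2.1)).symm
  -- quadruple part lands in H4
  have hquad : ∀ t ∈ J3F n, t.2.2 ∈ H4 := by
    intro t ht
    obtain ⟨-, -, h3, h4, h5, h6, -⟩ := hmemJ t ht
    simp only [hH4, Finset.mem_product, Finset.mem_Icc]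
    exact ⟨⟨h3.1, Nat.le_floor h3.2⟩, ⟨h4.1, Nat.le_floor h4.2⟩,
      ⟨h5.1, Nat.le_floor h5.2⟩, ⟨h6.1, Nat.le_floor h6.2⟩⟩
  have hH4cube : ∀ b ∈ H4, b.1^3 ≤ n ∧ b.2.1^3 ≤ n ∧ b.2.2.1^3 ≤ n ∧ b.2.2.2^3 ≤ n := by
    intro b hb
    simp only [hH4, Finset.mem_product, Finset.mem_Icc] at hb
    obtain ⟨hb1, hb2, hb3, hb4⟩ := hb
    have l1 : (b.1:ℝ) ≤ P n 3 := le_trans (by exact_mod_cast hb1.2) hHP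
    have l2 : (b.2.1:ℝ) ≤ P n 3 := le_trans (by exact_mod_cast hb2.2) hHP
    have l3 : (b.2.2.1:ℝ) ≤ P n 3 := le_trans (by exact_mod_cast hb3.2) hHP
    have l4 : (b.2.2.2:ℝ) ≤ P n 3 := le_trans (by exact_mod_cast hb4.2) hHP
    exact ⟨hcube _ l1, hcube _ l2, hcube _ l3, hcube _ l4⟩
  -- ===================== F1 bound =====================
  have hfiber1 : ∀ b ∈ H4, ((F1.filter (fun t => t.2.2 = b)).card : ℝ) ≤ D := by
    intro b hb
    rcases Finset.eq_empty_or_nonempty (F1.filter (fun t => t.2.2 = b)) with hemp | ⟨t0, ht0⟩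
    · rw [hemp]; simp; linarith
    set s : ℤ := (b.1:ℤ)^3 + (b.2.1:ℤ)^3 - (b.2.2.1:ℤ)^3 - (b.2.2.2:ℤ)^3 with hs
    obtain ⟨ht0F1, ht0b⟩ := Finset.mem_filter.mp ht0
    obtain ⟨ht0J, ht0ne⟩ := Finset.mem_filter.mp ht0F1
    obtain ⟨hx1, hx2, -, -, -, -, heq0⟩ := hmemJ t0 ht0J
    have hsval : (t0.1:ℤ)^2 - (t0.2.1:ℤ)^2 = s := by rw [hs, ← ht0b]; exact heq0
    have hsne : s ≠ 0 := by
      intro h0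
      apply ht0ne
      have hsq : (t0.1:ℤ)^2 = (t0.2.1:ℤ)^2 := by rw [h0] at hsval; linarith
      have h2 : t0.1^2 = t0.2.1^2 := by exact_mod_cast hsq
      exact Nat.pow_left_injective (by norm_num) h2
    obtain ⟨hcb1, hcb2, hcb3, hcb4⟩ := hH4cube b hb
    have hsabs : s.natAbs ≤ 2*n := by
      have e1 : s = ((b.1^3 : ℕ):ℤ) + ((b.2.1^3 : ℕ):ℤ) - ((b.2.2.1^3 : ℕ):ℤ)
          - ((b.2.2.2^3 : ℕ):ℤ) := by rw [hs]; push_cast; ring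
      omega
    have hcard : (F1.filter (fun t => t.2.2 = b)).card ≤ (s.natAbs.divisors).card := by
      apply Finset.card_le_card_of_injOn (fun t => t.1 + t.2.1)
      · intro t ht
        obtain ⟨htF1, htb⟩ := Finset.mem_filter.mp ht
        obtain ⟨htJ, -⟩ := Finset.mem_filter.mp htF1
        obtain ⟨hx1', -, -, -, -, -, heq'⟩ := hmemJ t htJ
        have hfac : ((t.1:ℤ) + t.2.1) * ((t.1:ℤ) - t.2.1) = s := by
          rw [hs, ← htb]; linear_combination heq'
        have hdvd : ((t.1 + t.2.1 : ℕ):ℤ) ∣ s := ⟨(t.1:ℤ) - t.2.1, by push_cast; linarith [hfac]⟩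
        refine Nat.mem_divisors.mpr ⟨?_, by simpa using hsne⟩
        have h2 := Int.natAbs_dvd_natAbs.mpr hdvd
        rwa [Int.natAbs_natCast] at h2
      · intro t ht t' ht' hsum
        simp only [Finset.coe_filter, Set.mem_setOf_eq] at ht ht'
        obtain ⟨htF1, htb⟩ := ht
        obtain ⟨ht'F1, ht'b⟩ := ht'
        obtain ⟨htJ, -⟩ := Finset.mem_filter.mp htF1
        obtain ⟨ht'J, -⟩ := Finset.mem_filter.mp ht'F1
        obtain ⟨hx1', -, -, -, -, -, heq'⟩ := hmemJ t htJ
        obtain ⟨hx1'', -, -, -, -, -, heq''⟩ := hmemJ t' ht'J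
        have hfac : ((t.1:ℤ) + t.2.1) * ((t.1:ℤ) - t.2.1) = s := by
          rw [hs, ← htb]; linear_combination heq'
        have hfac' : ((t'.1:ℤ) + t'.2.1) * ((t'.1:ℤ) - t'.2.1) = s := by
          rw [hs, ← ht'b]; linear_combination heq''
        have hsumZ : (t.1:ℤ) + t.2.1 = (t'.1:ℤ) + t'.2.1 := by exact_mod_cast hsum
        have hne0 : ((t.1:ℤ) + t.2.1) ≠ 0 := by
          have : 1 ≤ t.1 := hx1'.1
          positivity
        have hdiff : (t.1:ℤ) - t.2.1 = (t'.1:ℤ) - t'.2.1 := by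
          apply mul_left_cancel₀ hne0
          rw [hfac, hsumZ, hfac']
        have c1 : t.1 = t'.1 := by omega
        have c2 : t.2.1 = t'.2.1 := by omega
        exact Prod.ext_iff.mpr ⟨c1, Prod.ext_iff.mpr ⟨c2, htb.trans ht'b.symm⟩⟩
    calc ((F1.filter (fun t => t.2.2 = b)).card : ℝ) ≤ ((s.natAbs.divisors).card : ℝ) := by
          exact_mod_cast hcard
    _ ≤ D := hdiv s.natAbs (by simpa using hsne) hsabs
  have hIcc : (Finset.Icc 1 H).card = H := by rw [Nat.card_Icc]; omega
  have hH4card : (H4.card : ℝ) ≤ (H:ℝ)^4 := by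
    have h4 : H4.card = H^4 := by
      simp only [hH4, Finset.card_product, hIcc]; ring
    rw [h4]; push_cast; exact le_rfl
  have hF1 : (F1.card : ℝ) ≤ (H:ℝ)^4 * D := by
    have hfw := Finset.card_eq_sum_card_fiberwise
      (fun t ht => hquad t (Finset.mem_filter.mp ht).1 : ∀ t ∈ F1, t.2.2 ∈ H4)
    calc (F1.card:ℝ) = ∑ b ∈ H4, ((F1.filter (fun t => t.2.2 = b)).card : ℝ) := by
          rw [hfw]; push_cast; rfl
    _ ≤ ∑ _b ∈ H4, D := Finset.sum_le_sum hfiber1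
    _ = (H4.card : ℝ) * D := by rw [Finset.sum_const, nsmul_eq_mul]
    _ ≤ (H:ℝ)^4 * D := mul_le_mul_of_nonneg_right hH4card (le_of_lt hD0)
  -- ===================== F0 bound =====================
  set G : Finset (ℕ×ℕ×ℕ×ℕ) :=
    H4.filter (fun h => h.1^3 + h.2.1^3 = h.2.2.1^3 + h.2.2.2^3) with hGdef
  have hfiberG : ∀ c ∈ (Finset.Icc 1 H ×ˢ Finset.Icc 1 H),
      ((G.filter (fun h => h.2.2 = c)).card : ℝ) ≤ 2 * D := by
    intro c hc
    rw [Finset.mem_product, Finset.mem_Icc, Finset.mem_Icc] at hc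
    set s : ℕ := c.1^3 + c.2^3 with hsdef
    have hs0 : s ≠ 0 := by
      have : 1 ≤ c.1^3 := Nat.one_le_pow _ _ (by omega)
      omega
    have hc1P : (c.1:ℝ) ≤ P n 3 := le_trans (by exact_mod_cast hc.1.2) hHP
    have hc2P : (c.2:ℝ) ≤ P n 3 := le_trans (by exact_mod_cast hc.2.2) hHP
    have hs2n : s ≤ 2*n := by
      have e1 := hcube c.1 hc1P
      have e2 := hcube c.2 hc2P
      omega
    have hinj : (G.filter (fun h => h.2.2 = c)).card
        ≤ (s.divisors ×ˢ (Finset.univ : Finset Bool)).card := by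
      apply Finset.card_le_card_of_injOn (fun h => (h.1 + h.2.1, decide (h.1 ≤ h.2.1)))
      · intro h hh
        obtain ⟨hhG, hhc⟩ := Finset.mem_filter.mp hh
        obtain ⟨hhH4, hheq⟩ := Finset.mem_filter.mp hhG
        rw [hhc] at hheq
        simp only [Finset.mem_coe]
        rw [Finset.mem_product]
        refine ⟨Nat.mem_divisors.mpr ⟨?_, hs0⟩, Finset.mem_univ _⟩
        have hdvd : ((h.1 + h.2.1 : ℕ):ℤ) ∣ (s:ℤ) :=
          ⟨(h.1:ℤ)^2 - h.1*h.2.1 + h.2.1^2, by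
            rw [hsdef, ← hheq]; push_cast; ring⟩
        exact_mod_cast hdvd
      · intro h hh h' hh' hpair
        simp only [Finset.coe_filter, Set.mem_setOf_eq] at hh hh'
        obtain ⟨hhG, hhc⟩ := hh
        obtain ⟨hh'G, hh'c⟩ := hh'
        obtain ⟨hhH4, hheq⟩ := Finset.mem_filter.mp hhG
        obtain ⟨hh'H4, hh'eq⟩ := Finset.mem_filter.mp hh'G
        rw [hhc] at hheq
        rw [hh'c] at hh'eq
        simp only [Prod.mk.injEq] at hpair
        obtain ⟨hsum, hbool⟩ := hpair
        have hiff : (h.1 ≤ h.2.1) ↔ (h'.1 ≤ h'.2.1) := decide_eq_decide.mp hbool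
        have hseqZ : (h.1:ℤ)^3 + (h.2.1:ℤ)^3 = (h'.1:ℤ)^3 + (h'.2.1:ℤ)^3 := by
          exact_mod_cast hheq.trans hh'eq.symm
        have hsumZ : (h.1:ℤ) + h.2.1 = (h'.1:ℤ) + h'.2.1 := by exact_mod_cast hsum
        have hb'Z : (h'.2.1:ℤ) = (h.1:ℤ) + h.2.1 - h'.1 := by linarith
        rw [hb'Z] at hseqZ
        have key3 : (3:ℤ) * (((h.1:ℤ) - h'.1) * (((h.2.1:ℤ)) - h'.1) * ((h.1:ℤ) + h.2.1)) = 0 := by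
          linear_combination -hseqZ
        have key : ((h.1:ℤ) - h'.1) * (((h.2.1:ℤ)) - h'.1) = 0 := by
          have hne : ((h.1:ℤ) + h.2.1) ≠ 0 := by
            simp only [hH4, Finset.mem_product, Finset.mem_Icc] at hhH4
            have : 1 ≤ h.1 := hhH4.1.1
            positivity
          have := mul_eq_zero.mp (by linarith [key3] :
            (((h.1:ℤ) - h'.1) * (((h.2.1:ℤ)) - h'.1)) * ((h.1:ℤ) + h.2.1) = 0)
          tauto
        have hcomp : h.1 = h'.1 ∧ h.2.1 = h'.2.1 := by
          rcases mul_eq_zero.mp key with hk | hk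
          · constructor <;> omega
          · constructor <;> omega
        refine Prod.ext_iff.mpr ⟨hcomp.1, Prod.ext_iff.mpr ⟨hcomp.2, hhc.trans hh'c.symm⟩⟩
    calc ((G.filter (fun h => h.2.2 = c)).card : ℝ)
        ≤ ((s.divisors ×ˢ (Finset.univ : Finset Bool)).card : ℝ) := by exact_mod_cast hinj
    _ = (s.divisors.card : ℝ) * 2 := by
        rw [Finset.card_product, Finset.card_univ, Fintype.card_bool]
        push_cast; ring
    _ ≤ D * 2 := mul_le_mul_of_nonneg_right (hdiv s hs0 hs2n) (by norm_num)
    _ = 2 * D := by ring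
  have hGcard : (G.card : ℝ) ≤ (H:ℝ)^2 * (2*D) := by
    have hmapG : ∀ h ∈ G, h.2.2 ∈ Finset.Icc 1 H ×ˢ Finset.Icc 1 H := by
      intro h hh
      obtain ⟨hhH4, -⟩ := Finset.mem_filter.mp hh
      simp only [hH4, Finset.mem_product, Finset.mem_Icc] at hhH4
      rw [Finset.mem_product]
      exact ⟨Finset.mem_Icc.mpr hhH4.2.2.1, Finset.mem_Icc.mpr hhH4.2.2.2⟩
    have hfw := Finset.card_eq_sum_card_fiberwise hmapG
    calc (G.card : ℝ)
        = ∑ c ∈ Finset.Icc 1 H ×ˢ Finset.Icc 1 H,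
            ((G.filter (fun h => h.2.2 = c)).card : ℝ) := by rw [hfw]; push_cast; rfl
    _ ≤ ∑ _c ∈ Finset.Icc 1 H ×ˢ Finset.Icc 1 H, 2 * D := Finset.sum_le_sum hfiberG
    _ = ((Finset.Icc 1 H ×ˢ Finset.Icc 1 H).card : ℝ) * (2 * D) := by
        rw [Finset.sum_const, nsmul_eq_mul]
    _ ≤ (H:ℝ)^2 * (2*D) := by
        apply mul_le_mul_of_nonneg_right _ (by linarith)
        rw [Finset.card_product, hIcc]
        push_cast; nlinarith [hD0]
  have hF0 : (F0.card : ℝ) ≤ (X:ℝ) * ((H:ℝ)^2 * (2*D)) := by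
    have hcard : F0.card ≤ (Finset.Icc 1 X ×ˢ G).card := by
      apply Finset.card_le_card_of_injOn (fun t => (t.1, t.2.2))
      · intro t ht
        obtain ⟨htJ, hteq⟩ := Finset.mem_filter.mp ht
        obtain ⟨hx1, hx2, h3, h4, h5, h6, heq⟩ := hmemJ t htJ
        simp only [Finset.mem_coe]
        rw [Finset.mem_product]
        constructor
        · rw [Finset.mem_Icc]; exact ⟨hx1.1, Nat.le_floor hx1.2⟩
        · rw [hGdef, Finset.mem_filter]
          refine ⟨hquad t htJ, ?_⟩
          have hZ : (t.2.2.1:ℤ)^3 + (t.2.2.2.1:ℤ)^3 = (t.2.2.2.2.1:ℤ)^3 + (t.2.2.2.2.2:ℤ)^3 := by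
            rw [hteq] at heq; linarith
          exact_mod_cast hZ
      · intro t ht t' ht' hpair
        rw [Finset.mem_coe, hF0def, Finset.mem_filter] at ht ht'
        obtain ⟨-, hteq⟩ := ht
        obtain ⟨-, ht'eq⟩ := ht'
        simp only [Prod.mk.injEq] at hpair
        obtain ⟨h1, h2⟩ := hpair
        refine Prod.ext_iff.mpr ⟨h1, Prod.ext_iff.mpr ⟨?_, h2⟩⟩
        rw [← hteq, ← ht'eq, h1]
    calc (F0.card : ℝ) ≤ ((Finset.Icc 1 X ×ˢ G).card : ℝ) := by exact_mod_cast hcard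
    _ = (X:ℝ) * (G.card:ℝ) := by
        rw [Finset.card_product, Nat.card_Icc, Nat.add_sub_cancel]
        push_cast; ring
    _ ≤ (X:ℝ) * ((H:ℝ)^2 * (2*D)) := by
        apply mul_le_mul_of_nonneg_left hGcard (by positivity)
  -- ===================== assembly =====================
  have hP2pos : (0:ℝ) < P n 2 := lt_of_lt_of_le zero_lt_one (one_le_P hn 2)
  have hP3pos : (0:ℝ) < P n 3 := lt_of_lt_of_le zero_lt_one (one_le_P hn 3)
  have hDK : D ≤ K * (n:ℝ) ^ (ε/6) := by
    rw [hD, hK, Real.mul_rpow (by norm_num) (by positivity)]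
    ring_nf
    exact le_rfl
  have hnP3 : (n:ℝ) ^ (ε/6) ≤ P n 3 ^ ε := by
    rw [P, ← Real.rpow_mul (by positivity)]
    apply Real.rpow_le_rpow_of_exponent_le hn1
    rw [inv_mul_eq_div]
    linarith
  have hnP2 : (n:ℝ) ^ (ε/6) ≤ P n 2 ^ ε := by
    rw [P, ← Real.rpow_mul (by positivity)]
    apply Real.rpow_le_rpow_of_exponent_le hn1
    rw [inv_mul_eq_div]
    linarith
  have hXn : (X:ℝ) ≤ P n 2 := hXP
  have hrpow2 : P n 3 ^ ((2:ℝ) + ε) = P n 3 ^ (2:ℕ) * P n 3 ^ ε := by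
    rw [Real.rpow_add hP3pos]
    congr 1
    rw [show (2:ℝ) = ((2:ℕ):ℝ) by norm_num, Real.rpow_natCast]
  have hKpos : (0:ℝ) < K := by linarith
  have hnpos : (0:ℝ) < (n:ℝ)^(ε/6) := Real.rpow_pos_of_pos (by linarith) _
  have hHp : (H:ℝ) ^ 2 ≤ P n 3 ^ (2:ℕ) := by
    apply pow_le_pow_left₀ (by positivity) hHP
  have hHp4 : (H:ℝ) ^ 4 ≤ P n 3 ^ (4:ℕ) := by
    apply pow_le_pow_left₀ (by positivity) hHP
  have step1 : ((J3F n).card : ℝ) ≤ P n 2 * (P n 3 ^ (2:ℕ) * (2*D)) + P n 3 ^ (4:ℕ) * D := by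
    calc ((J3F n).card : ℝ) = (F0.card : ℝ) + (F1.card : ℝ) := by rw [hsplit]; push_cast; ring
    _ ≤ (X:ℝ) * ((H:ℝ)^2 * (2*D)) + (H:ℝ)^4 * D := add_le_add hF0 hF1
    _ ≤ P n 2 * (P n 3 ^ (2:ℕ) * (2*D)) + P n 3 ^ (4:ℕ) * D := by
        apply add_le_add
        · exact mul_le_mul hXn (mul_le_mul_of_nonneg_right hHp (by positivity))
            (by positivity) (le_of_lt hP2pos)
        · apply mul_le_mul hHp4 le_rfl (le_of_lt hD0) (by positivity)
  have step2 : P n 2 * (P n 3 ^ (2:ℕ) * (2*D)) + P n 3 ^ (4:ℕ) * D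
      ≤ 2*K * (P n 2 * P n 3 ^ ((2:ℝ)+ε)) + K * (P n 2 ^ ε * P n 3 ^ (4:ℕ)) := by
    have t1 : P n 2 * (P n 3 ^ (2:ℕ) * (2*D)) ≤ 2*K * (P n 2 * P n 3 ^ ((2:ℝ)+ε)) := by
      rw [hrpow2]
      calc P n 2 * (P n 3 ^ (2:ℕ) * (2*D)) ≤ P n 2 * (P n 3 ^ (2:ℕ) * (2*(K * (n:ℝ)^(ε/6)))) := by
            apply mul_le_mul_of_nonneg_left _ (le_of_lt hP2pos)
            apply mul_le_mul_of_nonneg_left _ (by positivity)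
            linarith
      _ ≤ P n 2 * (P n 3 ^ (2:ℕ) * (2*(K * P n 3 ^ ε))) := by
            apply mul_le_mul_of_nonneg_left _ (le_of_lt hP2pos)
            apply mul_le_mul_of_nonneg_left _ (by positivity)
            apply mul_le_mul_of_nonneg_left _ (by norm_num)
            exact mul_le_mul_of_nonneg_left hnP3 (le_of_lt hKpos)
      _ = 2*K * (P n 2 * (P n 3 ^ (2:ℕ) * P n 3 ^ ε)) := by ring
    have t2 : P n 3 ^ (4:ℕ) * D ≤ K * (P n 2 ^ ε * P n 3 ^ (4:ℕ)) := by
      calc P n 3 ^ (4:ℕ) * D ≤ P n 3 ^ (4:ℕ) * (K * (n:ℝ)^(ε/6)) := by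
            apply mul_le_mul_of_nonneg_left hDK (by positivity)
      _ ≤ P n 3 ^ (4:ℕ) * (K * P n 2 ^ ε) := by
            apply mul_le_mul_of_nonneg_left _ (by positivity)
            exact mul_le_mul_of_nonneg_left hnP2 (le_of_lt hKpos)
      _ = K * (P n 2 ^ ε * P n 3 ^ (4:ℕ)) := by ring
    linarith
  calc ((J3F n).card : ℝ) ≤ 2*K * (P n 2 * P n 3 ^ ((2:ℝ)+ε)) + K * (P n 2 ^ ε * P n 3 ^ (4:ℕ)) :=
        le_trans step1 step2
  _ ≤ 2*K * (P n 2 * P n 3 ^ ((2:ℝ)+ε) + P n 2 ^ ε * P n 3 ^ (4:ℕ)) := by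
      have hpos : (0:ℝ) ≤ P n 2 ^ ε * P n 3 ^ (4:ℕ) := by positivity
      linarith [mul_nonneg (le_of_lt hKpos) hpos]

lemma e_mul (x y : ℝ) : e x * e y = e (x + y) := by
  unfold e; rw [← Complex.exp_add]; congr 1; push_cast; ring

lemma key2 {ι κ : Type*} (s : Finset ι) (t : Finset κ) (g : ι → ℝ) (h : κ → ℝ)
    (L : ι → ℝ) (M : κ → ℝ) :
    (∑ i ∈ s, e (g i) * (L i : ℂ)) * (∑ j ∈ t, e (h j) * (M j : ℂ)) =
      ∑ x ∈ s ×ˢ t, e (g x.1 + h x.2) * ((L x.1 * M x.2 : ℝ) : ℂ) := by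
  rw [Finset.sum_mul_sum, Finset.sum_product]
  refine Finset.sum_congr rfl fun i _ => Finset.sum_congr rfl fun j _ => ?_
  rw [mul_mul_mul_comm, e_mul]
  push_cast
  ring

lemma conj_f (n k : ℕ) (α : ℝ) : (starRingEnd ℂ) (f n k α) = f n k (-α) := by
  unfold f
  rw [map_sum]
  refine Finset.sum_congr rfl fun p _ => ?_
  rw [map_mul, Complex.conj_ofReal]
  congr 1
  unfold e
  rw [← Complex.exp_conj]
  congr 1
  simp only [map_mul, Complex.conj_ofReal, Complex.conj_I, map_ofNat]
  push_cast
  ring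

lemma integral_e (M : ℤ) : (∫ α in (0:ℝ)..1, e (α * M)) = if M = 0 then 1 else 0 := by
  have hrw : ∀ α : ℝ, e (α * M) = Complex.exp ((2 * Real.pi * Complex.I * M) * α) := by
    intro α
    unfold e
    congr 1
    push_cast
    ring
  simp only [hrw]
  by_cases hM : M = 0
  · simp [hM]
  · rw [if_neg hM]
    have hc : (2 * (Real.pi:ℂ) * Complex.I * M) ≠ 0 := by
      simp [Real.pi_ne_zero, Complex.I_ne_zero, hM]
    rw [integral_exp_mul_complex hc]
    have h1 : Complex.exp (2 * (Real.pi:ℂ) * Complex.I * M * 1) = 1 := by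
      rw [mul_one]
      have := Complex.exp_int_mul_two_pi_mul_I M
      rw [← this]
      congr 1
      ring
    rw [show ((1:ℝ):ℂ) = 1 by norm_num, h1]
    simp

/-- The index type for the sixfold expansion. -/
abbrev J3I : Type := (((((ℕ×ℕ)×ℕ)×ℕ)×ℕ)×ℕ)

def MI (x : J3I) : ℤ :=
  (x.1.1.1.1.1:ℤ)^2 - (x.1.1.1.1.2:ℤ)^2 + (x.1.1.1.2:ℤ)^3 + (x.1.1.2:ℤ)^3
    - (x.1.2:ℤ)^3 - (x.2:ℤ)^3

noncomputable def CL (x : J3I) : ℝ :=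
  Real.log x.1.1.1.1.1 * Real.log x.1.1.1.1.2 * Real.log x.1.1.1.2 * Real.log x.1.1.2
    * Real.log x.1.2 * Real.log x.2

lemma prod6_le {a b c d e f L : ℝ} (ha : 0 ≤ a) (ha' : a ≤ L) (hb : 0 ≤ b) (hb' : b ≤ L)
    (hc : 0 ≤ c) (hc' : c ≤ L) (hd : 0 ≤ d) (hd' : d ≤ L) (he : 0 ≤ e) (he' : e ≤ L)
    (hf : 0 ≤ f) (hf' : f ≤ L) : a*b*c*d*e*f ≤ L^6 := by
  have hL : 0 ≤ L := le_trans ha ha'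
  have h2 : a*b ≤ L*L := mul_le_mul ha' hb' hb hL
  have h3 : a*b*c ≤ L*L*L := mul_le_mul h2 hc' hc (by positivity)
  have h4 : a*b*c*d ≤ L*L*L*L := mul_le_mul h3 hd' hd (by positivity)
  have h5 : a*b*c*d*e ≤ L*L*L*L*L := mul_le_mul h4 he' he (by positivity)
  have h6 : a*b*c*d*e*f ≤ L*L*L*L*L*L := mul_le_mul h5 hf' hf (by positivity)
  calc a*b*c*d*e*f ≤ L*L*L*L*L*L := h6
  _ = L^6 := by ring

set_option maxHeartbeats 1000000 in
lemma J3integral (n : ℕ) (hn : 1 ≤ n) :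
    (∫ α in (0:ℝ)..1, ‖f n 2 α‖^2 * ‖f n 3 α‖^4)
      ≤ (Real.log (n+1))^6 * ((J3F n).card : ℝ) := by
  classical
  set A : Finset ℕ := (Finset.range (n + 1)).filter
      (fun p : ℕ => p.Prime ∧ P n 2 / 2 < (p : ℝ) ∧ (p : ℝ) ≤ P n 2) with hA
  set B : Finset ℕ := (Finset.range (n + 1)).filter
      (fun p : ℕ => p.Prime ∧ P n 3 / 2 < (p : ℝ) ∧ (p : ℝ) ≤ P n 3) with hB
  set T : Finset J3I := ((((A ×ˢ A) ×ˢ B) ×ˢ B) ×ˢ B) ×ˢ B with hT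
  -- pointwise expansion
  have hpt : ∀ α : ℝ, ((‖f n 2 α‖^2 * ‖f n 3 α‖^4 : ℝ) : ℂ)
      = ∑ x ∈ T, e (α * (MI x : ℝ)) * ((CL x : ℝ) : ℂ) := by
    intro α
    have hz2 : f n 2 α * (starRingEnd ℂ) (f n 2 α) = ((‖f n 2 α‖^2 : ℝ) : ℂ) := by
      rw [Complex.mul_conj]; norm_cast; exact Complex.normSq_eq_norm_sq _
    have hz3 : f n 3 α * (starRingEnd ℂ) (f n 3 α) = ((‖f n 3 α‖^2 : ℝ) : ℂ) := by
      rw [Complex.mul_conj]; norm_cast; exact Complex.normSq_eq_norm_sq _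
    calc ((‖f n 2 α‖^2 * ‖f n 3 α‖^4 : ℝ) : ℂ)
        = (f n 2 α * (starRingEnd ℂ) (f n 2 α)) * (f n 3 α * (starRingEnd ℂ) (f n 3 α))^2 := by
          rw [hz2, hz3]; push_cast; ring
    _ = f n 2 α * f n 2 (-α) * f n 3 α * f n 3 α * f n 3 (-α) * f n 3 (-α) := by
          rw [conj_f, conj_f]; ring
    _ = ∑ x ∈ T, e (α * (x.1.1.1.1.1 : ℝ)^2 + -α * (x.1.1.1.1.2 : ℝ)^2 + α * (x.1.1.1.2 : ℝ)^3
          + α * (x.1.1.2 : ℝ)^3 + -α * (x.1.2 : ℝ)^3 + -α * (x.2 : ℝ)^3) *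
          ((Real.log x.1.1.1.1.1 * Real.log x.1.1.1.1.2 * Real.log x.1.1.1.2 * Real.log x.1.1.2
            * Real.log x.1.2 * Real.log x.2 : ℝ) : ℂ) := by
          unfold f
          rw [key2, key2, key2, key2, key2]
    _ = ∑ x ∈ T, e (α * (MI x : ℝ)) * ((CL x : ℝ) : ℂ) := by
          refine Finset.sum_congr rfl fun x _ => ?_
          congr 1
          congr 1
          unfold MI
          push_cast
          ring
  -- integration
  have hcont : ∀ x ∈ T, IntervalIntegrable
      (fun α : ℝ => e (α * (MI x : ℝ)) * ((CL x : ℝ) : ℂ)) volume 0 1 := by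
    intro x _
    apply Continuous.intervalIntegrable
    apply Continuous.mul _ continuous_const
    unfold e
    fun_prop
  have hint : (∫ α in (0:ℝ)..1, ((‖f n 2 α‖^2 * ‖f n 3 α‖^4 : ℝ) : ℂ))
      = ∑ x ∈ T.filter (fun x => MI x = 0), ((CL x : ℝ) : ℂ) := by
    rw [intervalIntegral.integral_congr (fun α _ => hpt α)]
    rw [intervalIntegral.integral_finset_sum hcont]
    have heach : ∀ x ∈ T, (∫ α in (0:ℝ)..1, e (α * (MI x:ℝ)) * ((CL x : ℝ):ℂ))
        = (if MI x = 0 then ((CL x : ℝ):ℂ) else 0) := by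
      intro x _
      rw [intervalIntegral.integral_mul_const, integral_e]
      split <;> simp
    rw [Finset.sum_congr rfl heach, Finset.sum_ite, Finset.sum_const_zero, add_zero]
  -- real form
  have hreal : (∫ α in (0:ℝ)..1, ‖f n 2 α‖^2 * ‖f n 3 α‖^4)
      = ∑ x ∈ T.filter (fun x => MI x = 0), CL x := by
    have h0 : ((∫ α in (0:ℝ)..1, ‖f n 2 α‖^2 * ‖f n 3 α‖^4 : ℝ) : ℂ)
        = ((∑ x ∈ T.filter (fun x => MI x = 0), CL x : ℝ) : ℂ) := by
      rw [← intervalIntegral.integral_ofReal, hint]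
      push_cast
      rfl
    exact_mod_cast h0
  rw [hreal]
  -- bounding the sum
  have hlog1 : (0:ℝ) ≤ Real.log (n+1) := Real.log_nonneg (by exact_mod_cast Nat.le_add_left 1 n)
  have hmemlog : ∀ (k : ℕ) (p : ℕ), p ∈ (Finset.range (n + 1)).filter
      (fun p : ℕ => p.Prime ∧ P n k / 2 < (p : ℝ) ∧ (p : ℝ) ≤ P n k) →
      0 ≤ Real.log p ∧ Real.log p ≤ Real.log (n+1) := by
    intro k p hp
    rw [Finset.mem_filter, Finset.mem_range] at hp
    have hp1 : (1:ℝ) ≤ (p:ℝ) := by exact_mod_cast hp.2.1.one_lt.le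
    constructor
    · exact Real.log_nonneg hp1
    · apply Real.log_le_log (by linarith)
      have : (p:ℝ) ≤ (n:ℝ) := by exact_mod_cast Nat.lt_succ_iff.mp hp.1
      linarith
  have hCL : ∀ x ∈ T.filter (fun x => MI x = 0), CL x ≤ (Real.log (n+1))^6 := by
    intro x hx
    obtain ⟨hxT, -⟩ := Finset.mem_filter.mp hx
    rw [hT] at hxT
    simp only [Finset.mem_product] at hxT
    obtain ⟨⟨⟨⟨⟨m1, m2⟩, m3⟩, m4⟩, m5⟩, m6⟩ := hxT
    obtain ⟨l1, l1'⟩ := hmemlog 2 _ m1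
    obtain ⟨l2, l2'⟩ := hmemlog 2 _ m2
    obtain ⟨l3, l3'⟩ := hmemlog 3 _ m3
    obtain ⟨l4, l4'⟩ := hmemlog 3 _ m4
    obtain ⟨l5, l5'⟩ := hmemlog 3 _ m5
    obtain ⟨l6, l6'⟩ := hmemlog 3 _ m6
    exact prod6_le l1 l1' l2 l2' l3 l3' l4 l4' l5 l5' l6 l6'
  have hCLpos : ∀ x ∈ T.filter (fun x => MI x = 0), (0:ℝ) ≤ CL x := by
    intro x hx
    obtain ⟨hxT, -⟩ := Finset.mem_filter.mp hx
    rw [hT] at hxT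
    simp only [Finset.mem_product] at hxT
    obtain ⟨⟨⟨⟨⟨m1, m2⟩, m3⟩, m4⟩, m5⟩, m6⟩ := hxT
    exact mul_nonneg (mul_nonneg (mul_nonneg (mul_nonneg (mul_nonneg
      (hmemlog 2 _ m1).1 (hmemlog 2 _ m2).1) (hmemlog 3 _ m3).1) (hmemlog 3 _ m4).1)
      (hmemlog 3 _ m5).1) (hmemlog 3 _ m6).1
  -- the filtered set injects into J3F
  have hcard : (T.filter (fun x => MI x = 0)).card ≤ (J3F n).card := by
    apply Finset.card_le_card_of_injOn
      (fun x => (x.1.1.1.1.1, x.1.1.1.1.2, x.1.2, x.2, x.1.1.1.2, x.1.1.2))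
    · intro x hx
      obtain ⟨hxT, hM0⟩ := Finset.mem_filter.mp hx
      rw [hT] at hxT
      simp only [Finset.mem_product] at hxT
      obtain ⟨⟨⟨⟨⟨m1, m2⟩, m3⟩, m4⟩, m5⟩, m6⟩ := hxT
      rw [hA, Finset.mem_filter, Finset.mem_range] at m1 m2
      rw [hB, Finset.mem_filter, Finset.mem_range] at m3 m4 m5 m6
      simp only [Finset.mem_coe]
      rw [J3F, Finset.mem_filter]
      constructor
      · simp only [Finset.mem_product, Finset.mem_range]
        exact ⟨m1.1, m2.1, m5.1, m6.1, m3.1, m4.1⟩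
      · refine ⟨⟨m1.2.1.one_lt.le, m1.2.2.2⟩, ⟨m2.2.1.one_lt.le, m2.2.2.2⟩,
          ⟨m5.2.1.one_lt.le, m5.2.2.2⟩, ⟨m6.2.1.one_lt.le, m6.2.2.2⟩,
          ⟨m3.2.1.one_lt.le, m3.2.2.2⟩, ⟨m4.2.1.one_lt.le, m4.2.2.2⟩, ?_⟩
        have := hM0
        unfold MI at this
        simp only at this ⊢
        linarith [this]
    · intro x hx y hy hxy
      obtain ⟨⟨⟨⟨⟨a1, a2⟩, a3⟩, a4⟩, a5⟩, a6⟩ := x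
      obtain ⟨⟨⟨⟨⟨b1, b2⟩, b3⟩, b4⟩, b5⟩, b6⟩ := y
      simp only [Prod.mk.injEq] at hxy ⊢
      tauto
  calc ∑ x ∈ T.filter (fun x => MI x = 0), CL x
      ≤ (T.filter (fun x => MI x = 0)).card • (Real.log (n+1))^6 :=
        Finset.sum_le_card_nsmul _ _ _ hCL
  _ = ((T.filter (fun x => MI x = 0)).card : ℝ) * (Real.log (n+1))^6 := by
        rw [nsmul_eq_mul]
  _ ≤ ((J3F n).card : ℝ) * (Real.log (n+1))^6 := by
        apply mul_le_mul_of_nonneg_right _ (by positivity)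
        exact_mod_cast hcard
  _ = (Real.log (n+1))^6 * ((J3F n).card : ℝ) := by ring

/-- `J_3 = ∫_0^1 |f_2|² |f_3|⁴ dα ≪ n^{4/3+ε}`; more precisely, the number of solutions of
`x1² - x2² = h1³ + h2³ - h3³ - h4³` with `1 ≤ x1, x2 ≤ P_2`, `1 ≤ hᵢ ≤ P_3` is
`≪ P_2 P_3^{2+ε} + P_2^ε P_3⁴`. -/
theorem J3_bound (ε : ℝ) (hε : 0 < ε) :
    ∃ C : ℝ, 0 < C ∧ ∃ N : ℕ, ∀ n : ℕ, N ≤ n →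
      (∫ α in (0 : ℝ)..1, ‖f n 2 α‖ ^ 2 * ‖f n 3 α‖ ^ 4) ≤ C * (n : ℝ) ^ ((4 : ℝ) / 3 + ε) ∧
      (Nat.card {t : ℕ × ℕ × ℕ × ℕ × ℕ × ℕ //
          (1 ≤ t.1 ∧ (t.1 : ℝ) ≤ P n 2) ∧
          (1 ≤ t.2.1 ∧ (t.2.1 : ℝ) ≤ P n 2) ∧
          (1 ≤ t.2.2.1 ∧ (t.2.2.1 : ℝ) ≤ P n 3) ∧
          (1 ≤ t.2.2.2.1 ∧ (t.2.2.2.1 : ℝ) ≤ P n 3) ∧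
          (1 ≤ t.2.2.2.2.1 ∧ (t.2.2.2.2.1 : ℝ) ≤ P n 3) ∧
          (1 ≤ t.2.2.2.2.2 ∧ (t.2.2.2.2.2 : ℝ) ≤ P n 3) ∧
          (t.1 : ℤ) ^ 2 - (t.2.1 : ℤ) ^ 2 =
            (t.2.2.1 : ℤ) ^ 3 + (t.2.2.2.1 : ℤ) ^ 3
              - (t.2.2.2.2.1 : ℤ) ^ 3 - (t.2.2.2.2.2 : ℤ) ^ 3} : ℝ) ≤
        C * (P n 2 * P n 3 ^ ((2 : ℝ) + ε) + P n 2 ^ ε * P n 3 ^ (4 : ℕ)) := by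
  
  classical
  obtain ⟨C₁, hC₁1, hC₁⟩ := J3count (show (0:ℝ) < ε/2 by linarith)
  obtain ⟨C₂, hC₂1, hC₂⟩ := J3count hε
  set Cl : ℝ := (24/ε)^6 * (2:ℝ)^(ε/4) with hCl
  have hCl0 : (0:ℝ) < Cl := by rw [hCl]; positivity
  refine ⟨2*C₁*Cl + C₂, by nlinarith, 1, fun n hn => ?_⟩
  have hn1 : (1:ℝ) ≤ (n:ℝ) := by exact_mod_cast hn
  have hn0 : (0:ℝ) < (n:ℝ) := by linarith
  have hP2 : (1:ℝ) ≤ P n 2 := one_le_P hn 2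
  have hP3 : (1:ℝ) ≤ P n 3 := one_le_P hn 3
  have hbr0 : (0:ℝ) ≤ P n 2 * P n 3 ^ ((2:ℝ) + ε) + P n 2 ^ ε * P n 3 ^ (4:ℕ) := by
    have h1 : (0:ℝ) ≤ P n 2 := by linarith
    have h2 : (0:ℝ) ≤ P n 3 := by linarith
    have := Real.rpow_nonneg h2 ((2:ℝ) + ε)
    have := Real.rpow_nonneg h1 ε
    have := pow_nonneg h2 4
    positivity
  constructor
  · -- integral bound
    have hI := J3integral n hn
    have hcount := hC₁ n hn
    have hb1 : P n 2 * P n 3 ^ ((2:ℝ)+ε/2) ≤ (n:ℝ) ^ ((4:ℝ)/3 + ε/2) := by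
      have e1 : P n 2 * P n 3 ^ ((2:ℝ)+ε/2)
          = (n:ℝ) ^ (((2:ℕ):ℝ)⁻¹ + ((3:ℕ):ℝ)⁻¹*((2:ℝ)+ε/2)) := by
        rw [P, P, ← Real.rpow_mul (le_of_lt hn0), ← Real.rpow_add hn0]
      rw [e1]
      apply Real.rpow_le_rpow_of_exponent_le hn1
      push_cast
      ring_nf
      linarith
    have hb2 : P n 2 ^ (ε/2) * P n 3 ^ (4:ℕ) ≤ (n:ℝ) ^ ((4:ℝ)/3 + ε/2) := by
      have e2 : P n 2 ^ (ε/2) * P n 3 ^ (4:ℕ)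
          = (n:ℝ) ^ (((2:ℕ):ℝ)⁻¹ * (ε/2) + ((3:ℕ):ℝ)⁻¹ * ((4:ℕ):ℝ)) := by
        rw [← Real.rpow_natCast (P n 3) 4, P, P, ← Real.rpow_mul (le_of_lt hn0),
          ← Real.rpow_mul (le_of_lt hn0), ← Real.rpow_add hn0]
      rw [e2]
      apply Real.rpow_le_rpow_of_exponent_le hn1
      push_cast
      ring_nf
      linarith
    have hbr : P n 2 * P n 3 ^ ((2:ℝ)+ε/2) + P n 2 ^ (ε/2) * P n 3 ^ (4:ℕ)
        ≤ 2 * (n:ℝ) ^ ((4:ℝ)/3 + ε/2) := by linarith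
    have hlognn : (0:ℝ) ≤ Real.log ((n:ℝ)+1) := Real.log_nonneg (by linarith)
    have hlog : (Real.log ((n:ℝ)+1))^6 ≤ Cl * (n:ℝ)^(ε/4) := by
      have h1 : Real.log ((n:ℝ)+1) ≤ ((n:ℝ)+1)^(ε/24) / (ε/24) :=
        Real.log_le_rpow_div (by positivity) (by positivity)
      have h1' : Real.log ((n:ℝ)+1) ≤ (24/ε) * ((n:ℝ)+1)^(ε/24) := by
        have hre : ((n:ℝ)+1)^(ε/24) / (ε/24) = (24/ε) * ((n:ℝ)+1)^(ε/24) := by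
          field_simp
        linarith [hre ▸ h1]
      have h2 : (Real.log ((n:ℝ)+1))^6 ≤ ((24/ε) * ((n:ℝ)+1)^(ε/24))^6 :=
        pow_le_pow_left₀ hlognn h1' 6
      have h4 : (((n:ℝ)+1)^(ε/24))^(6:ℕ) = ((n:ℝ)+1)^(ε/4) := by
        rw [← Real.rpow_natCast (((n:ℝ)+1)^(ε/24)) 6, ← Real.rpow_mul (by positivity)]
        congr 1
        push_cast
        ring
      have h5 : ((n:ℝ)+1)^(ε/4) ≤ (2*(n:ℝ))^(ε/4) :=
        Real.rpow_le_rpow (by positivity) (by linarith) (by positivity)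
      have h6 : (2*(n:ℝ))^(ε/4) = 2^(ε/4) * (n:ℝ)^(ε/4) :=
        Real.mul_rpow (by norm_num) (by positivity)
      calc (Real.log ((n:ℝ)+1))^6 ≤ ((24/ε) * ((n:ℝ)+1)^(ε/24))^6 := h2
      _ = (24/ε)^6 * (((n:ℝ)+1)^(ε/24))^(6:ℕ) := by rw [mul_pow]
      _ = (24/ε)^6 * ((n:ℝ)+1)^(ε/4) := by rw [h4]
      _ ≤ (24/ε)^6 * (2^(ε/4) * (n:ℝ)^(ε/4)) := by
          rw [← h6]
          exact mul_le_mul_of_nonneg_left h5 (by positivity)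
      _ = Cl * (n:ℝ)^(ε/4) := by rw [hCl]; ring
    have hcard0 : (0:ℝ) ≤ ((J3F n).card : ℝ) := by positivity
    calc (∫ α in (0:ℝ)..1, ‖f n 2 α‖^2 * ‖f n 3 α‖^4)
        ≤ (Real.log ((n:ℝ)+1))^6 * ((J3F n).card : ℝ) := hI
    _ ≤ (Cl * (n:ℝ)^(ε/4)) * ((J3F n).card : ℝ) :=
        mul_le_mul_of_nonneg_right hlog hcard0
    _ ≤ (Cl * (n:ℝ)^(ε/4)) * (C₁ * (2 * (n:ℝ) ^ ((4:ℝ)/3 + ε/2))) := by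
        apply mul_le_mul_of_nonneg_left _ (by positivity)
        calc ((J3F n).card : ℝ) ≤ C₁ * (P n 2 * P n 3 ^ ((2:ℝ)+ε/2) + P n 2 ^ (ε/2) * P n 3 ^ (4:ℕ)) :=
              hcount
        _ ≤ C₁ * (2 * (n:ℝ) ^ ((4:ℝ)/3 + ε/2)) :=
              mul_le_mul_of_nonneg_left hbr (by linarith)
    _ = (2*C₁*Cl) * ((n:ℝ)^(ε/4) * (n:ℝ)^((4:ℝ)/3 + ε/2)) := by ring
    _ = (2*C₁*Cl) * (n:ℝ)^(ε/4 + ((4:ℝ)/3 + ε/2)) := by rw [← Real.rpow_add hn0]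
    _ ≤ (2*C₁*Cl) * (n:ℝ)^((4:ℝ)/3 + ε) := by
        apply mul_le_mul_of_nonneg_left _ (by positivity)
        apply Real.rpow_le_rpow_of_exponent_le hn1
        linarith
    _ ≤ (2*C₁*Cl + C₂) * (n:ℝ)^((4:ℝ)/3 + ε) := by
        apply mul_le_mul_of_nonneg_right _ (by positivity)
        linarith
  · -- counting bound
    have hiff : ∀ t : ℕ × ℕ × ℕ × ℕ × ℕ × ℕ,
        ((1 ≤ t.1 ∧ (t.1 : ℝ) ≤ P n 2) ∧
          (1 ≤ t.2.1 ∧ (t.2.1 : ℝ) ≤ P n 2) ∧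
          (1 ≤ t.2.2.1 ∧ (t.2.2.1 : ℝ) ≤ P n 3) ∧
          (1 ≤ t.2.2.2.1 ∧ (t.2.2.2.1 : ℝ) ≤ P n 3) ∧
          (1 ≤ t.2.2.2.2.1 ∧ (t.2.2.2.2.1 : ℝ) ≤ P n 3) ∧
          (1 ≤ t.2.2.2.2.2 ∧ (t.2.2.2.2.2 : ℝ) ≤ P n 3) ∧
          (t.1 : ℤ) ^ 2 - (t.2.1 : ℤ) ^ 2 =
            (t.2.2.1 : ℤ) ^ 3 + (t.2.2.2.1 : ℤ) ^ 3
              - (t.2.2.2.2.1 : ℤ) ^ 3 - (t.2.2.2.2.2 : ℤ) ^ 3) ↔ t ∈ J3F n := by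
      intro t
      rw [J3F, Finset.mem_filter]
      constructor
      · intro h
        refine ⟨?_, h⟩
        have hle : ∀ (c : ℕ) (k : ℕ), 1 ≤ k → (c:ℝ) ≤ P n k → c ∈ Finset.range (n+1) := by
          intro c k hk hc
          rw [Finset.mem_range, Nat.lt_succ_iff]
          have : (c:ℝ) ≤ (n:ℝ) := le_trans hc (P_le_self hn hk)
          exact_mod_cast this
        simp only [Finset.mem_product]
        exact ⟨hle _ 2 (by norm_num) h.1.2, hle _ 2 (by norm_num) h.2.1.2,
          hle _ 3 (by norm_num) h.2.2.1.2, hle _ 3 (by norm_num) h.2.2.2.1.2,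
          hle _ 3 (by norm_num) h.2.2.2.2.1.2, hle _ 3 (by norm_num) h.2.2.2.2.2.1.2⟩
      · exact fun h => h.2
    have hNat : Nat.card {t : ℕ × ℕ × ℕ × ℕ × ℕ × ℕ //
        (1 ≤ t.1 ∧ (t.1 : ℝ) ≤ P n 2) ∧
        (1 ≤ t.2.1 ∧ (t.2.1 : ℝ) ≤ P n 2) ∧
        (1 ≤ t.2.2.1 ∧ (t.2.2.1 : ℝ) ≤ P n 3) ∧
        (1 ≤ t.2.2.2.1 ∧ (t.2.2.2.1 : ℝ) ≤ P n 3) ∧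
        (1 ≤ t.2.2.2.2.1 ∧ (t.2.2.2.2.1 : ℝ) ≤ P n 3) ∧
        (1 ≤ t.2.2.2.2.2 ∧ (t.2.2.2.2.2 : ℝ) ≤ P n 3) ∧
        (t.1 : ℤ) ^ 2 - (t.2.1 : ℤ) ^ 2 =
          (t.2.2.1 : ℤ) ^ 3 + (t.2.2.2.1 : ℤ) ^ 3
            - (t.2.2.2.2.1 : ℤ) ^ 3 - (t.2.2.2.2.2 : ℤ) ^ 3}
        = (J3F n).card := by
      rw [Nat.card_congr (Equiv.subtypeEquivRight hiff)]
      exact Nat.card_eq_finsetCard _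
    rw [hNat]
    calc ((J3F n).card : ℝ) ≤ C₂ * (P n 2 * P n 3 ^ ((2:ℝ) + ε) + P n 2 ^ ε * P n 3 ^ (4:ℕ)) :=
          hC₂ n hn
    _ ≤ (2*C₁*Cl + C₂) * (P n 2 * P n 3 ^ ((2:ℝ) + ε) + P n 2 ^ ε * P n 3 ^ (4:ℕ)) := by
        apply mul_le_mul_of_nonneg_right _ hbr0
        nlinarith
end
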